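/- arXiv:2604.11345 — 3 statements merged into one kernel-verified Lean document; each statement's English description precedes it below -/
import Mathlib

section
/- Assume the unknown-input Weierstrass decomposition, unknown-input historical data, and unknown-input persistent excitation hypotheses. Suppose every g ∈ ℝ^T with X_p·g = 0, U_p·g = 0, Y_p·g = 0 and Y_f·g = 0 satisfies X_f·g = 0, and suppose there exist matrices Σ_{X_p} ∈ ℝ^{n×n}, Σ_{U_p} ∈ ℝ^{n×m}, Σ_{Y_p} ∈ ℝ^{n×p}, Σ_{Y_f} ∈ ℝ^{n×p} with X_f = Σ_{X_p}·X_p + Σ_{U_p}·U_p + Σ_{Y_p}·Y_p + Σ_{Y_f}·Y_f and Σ_{X_p} Schur stable. Then for every trajectory (u, x, y) of the unknown-input descriptor system (with arbitrary unknown input η) and every initial estimate x̂(0) ∈ ℝ^n, the sequence defined recursively by x̂(k+1) = Σ_{X_p}·x̂(k) + Σ_{U_p}·u(k) + Σ_{Y_p}·y(k) + Σ_{Y_f}·y(k+1) satisfies ‖x(k) − x̂(k)‖ → 0 as k → ∞. -/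
open Matrix

noncomputable section

/-- Data matrix of depth `T` whose `k`-th column is `f (k + off)`. -/
def histMat {ι : Type} (T : ℕ) (f : ℕ → ι → ℝ) (off : ℕ) : Matrix ι (Fin T) ℝ :=
  Matrix.of fun i k => f ((k : ℕ) + off) i

/-- A real square matrix is Schur stable if every complex eigenvalue has modulus `< 1`. -/
def SchurStable {n : ℕ} (M : Matrix (Fin n) (Fin n) ℝ) : Prop :=
  ∀ μ ∈ spectrum ℂ (M.map (fun r : ℝ => (r : ℂ))), ‖μ‖ < 1

/-- View a real matrix as a complex matrix. -/
def cmap {a b : Type} (M : Matrix a b ℝ) : Matrix a b ℂ := M.map (fun r => (r : ℂ))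

/-!
In Weierstrass coordinates `x = P (z₁, z₂)` the fast state is determined by the future inputs,
`z₂(k) = -∑_{j<s} Rʲ (B₂ u(k+j) + F₂ η(k+j))`, because `R` is nilpotent. Hence both `x(k)` and
`x(k+1)` are linear functions of the window `(z₁(k), u(k), η(k), …, u(k+s), η(k+s))`. The data
equation `X_f = Σ_{X_p} X_p + Σ_{U_p} U_p + Σ_{Y_p} Y_p + Σ_{Y_f} Y_f` says that the linear
identity `x(k+1) = Σ_{X_p} x(k) + Σ_{U_p} u(k) + Σ_{Y_p} y(k) + Σ_{Y_f} y(k+1)` holds on every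
data window; by persistent excitation the data windows span the whole window space, so it holds
along every trajectory. The estimation error therefore obeys `e(k+1) = Σ_{X_p} e(k)`, and by
Gelfand's formula the powers of the Schur stable matrix `Σ_{X_p}` tend to zero.
-/

open Filter Topology

theorem LinearMap.ext_of_rank_histMat {κ V : Type} [Fintype κ] [AddCommGroup V] [Module ℝ V]
    {T : ℕ} {W : ℕ → κ → ℝ} (hW : (histMat T W 0).rank = Fintype.card κ)
    {f g : (κ → ℝ) →ₗ[ℝ] V} (h : ∀ t < T, f (W t) = g (W t)) : f = g := by
  have hspan : Submodule.span ℝ (Set.range (histMat T W 0).col) = ⊤ := by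
    apply Submodule.eq_top_of_finrank_eq
    rw [← Matrix.rank_eq_finrank_span_cols, hW, Module.finrank_fintype_fun_eq_card]
  exact LinearMap.ext_on_range hspan fun t => h t t.isLt

theorem succ_eq_of_histMat_eq {n m p T : ℕ} {xd : ℕ → Fin n → ℝ} {ud : ℕ → Fin m → ℝ}
    {yd : ℕ → Fin p → ℝ} {SXp : Matrix (Fin n) (Fin n) ℝ} {SUp : Matrix (Fin n) (Fin m) ℝ}
    {SYp SYf : Matrix (Fin n) (Fin p) ℝ}
    (h : histMat T xd 1 = SXp * histMat T xd 0 + SUp * histMat T ud 0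
      + SYp * histMat T yd 0 + SYf * histMat T yd 1) {t : ℕ} (ht : t < T) :
    xd (t + 1) = SXp *ᵥ xd t + SUp *ᵥ ud t + SYp *ᵥ yd t + SYf *ᵥ yd (t + 1) := by
  ext i
  simpa [histMat, Matrix.mul_apply, Matrix.mulVec, dotProduct] using
    congrFun (congrFun h i) ⟨t, ht⟩

theorem tendsto_norm_pow_atTop_nhds_zero_of_spectralRadius_lt_one {A : Type*} [NormedRing A]
    [NormedAlgebra ℂ A] [CompleteSpace A] {a : A} (ha : spectralRadius ℂ a < 1) :
    Tendsto (fun n => ‖a ^ n‖) atTop (𝓝 0) := by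
  obtain ⟨r, hρr, hr1⟩ := ENNReal.lt_iff_exists_nnreal_btwn.mp ha
  have hroot : ∀ᶠ n : ℕ in atTop, ‖a ^ n‖ ^ (1 / n : ℝ) < r := by
    have hgelfand := spectrum.pow_norm_pow_one_div_tendsto_nhds_spectralRadius a
    filter_upwards [hgelfand.eventually_lt_const hρr] with n hn
    exact (ENNReal.ofReal_lt_iff_lt_toReal (by positivity) ENNReal.coe_ne_top).mp hn
  have hpow : ∀ᶠ n : ℕ in atTop, ‖a ^ n‖ ≤ (r : ℝ) ^ n := by
    filter_upwards [hroot, eventually_ne_atTop 0] with n hn hn0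
    calc ‖a ^ n‖ = (‖a ^ n‖ ^ (1 / n : ℝ)) ^ n := by
          rw [one_div, Real.rpow_inv_natCast_pow (norm_nonneg _) hn0]
      _ ≤ (r : ℝ) ^ n := pow_le_pow_left₀ (by positivity) hn.le n
  exact squeeze_zero' (Eventually.of_forall fun n => norm_nonneg _) hpow
    (tendsto_pow_atTop_nhds_zero_of_lt_one r.2 (by exact_mod_cast hr1))

section LinftyNorm

attribute [local instance] Matrix.linftyOpNormedAddCommGroup Matrix.linftyOpNormedRing
  Matrix.linftyOpNormedAlgebra

theorem norm_cmap {N : ℕ} (M : Matrix (Fin N) (Fin N) ℝ) : ‖cmap M‖ = ‖M‖ := by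
  simp only [← coe_nnnorm, Matrix.linfty_opNNNorm_def, cmap, Matrix.map_apply, Complex.nnnorm_real]

theorem SchurStable.spectralRadius_cmap_lt_one {N : ℕ} {M : Matrix (Fin N) (Fin N) ℝ}
    (hM : SchurStable M) : spectralRadius ℂ (cmap M) < 1 := by
  rcases (spectrum ℂ (cmap M)).eq_empty_or_nonempty with hempty | hne
  · simp [spectralRadius, hempty]
  · exact spectrum.spectralRadius_lt_of_forall_lt_of_nonempty hne fun μ hμ =>
      by exact_mod_cast hM μ hμ

theorem SchurStable.tendsto_norm_pow {N : ℕ} {M : Matrix (Fin N) (Fin N) ℝ} (hM : SchurStable M) :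
    Tendsto (fun k => ‖M ^ k‖) atTop (𝓝 0) := by
  have hpow : ∀ k, cmap (M ^ k) = cmap M ^ k := map_pow Complex.ofRealHom.mapMatrix M
  simpa only [← norm_cmap, hpow] using
    tendsto_norm_pow_atTop_nhds_zero_of_spectralRadius_lt_one hM.spectralRadius_cmap_lt_one

theorem SchurStable.tendsto_norm_of_mulVec_succ {N : ℕ} {M : Matrix (Fin N) (Fin N) ℝ}
    (hM : SchurStable M) {e : ℕ → Fin N → ℝ} (he : ∀ k, e (k + 1) = M *ᵥ e k) :
    Tendsto (fun k => ‖e k‖) atTop (𝓝 0) := by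
  have hek : ∀ k, e k = M ^ k *ᵥ e 0 := by
    intro k
    induction k with
    | zero => simp
    | succ k ih => rw [he, ih, Matrix.mulVec_mulVec, pow_succ']
  refine squeeze_zero (fun k => norm_nonneg _) (fun k => ?_)
    (by simpa using hM.tendsto_norm_pow.mul_const ‖e 0‖)
  rw [hek]
  exact Matrix.linfty_opNorm_mulVec _ _

end LinftyNorm

def fromWeierstrass {n1 n2 : ℕ} (P : Matrix (Fin (n1 + n2)) (Fin (n1 + n2)) ℝ)
    (z1 : Fin n1 → ℝ) (z2 : Fin n2 → ℝ) : Fin (n1 + n2) → ℝ :=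
  P *ᵥ fun i => Sum.elim z1 z2 (finSumFinEquiv.symm i)

theorem exists_eq_fromWeierstrass {n1 n2 : ℕ} {P : Matrix (Fin (n1 + n2)) (Fin (n1 + n2)) ℝ}
    (hP : IsUnit P) (x : Fin (n1 + n2) → ℝ) : ∃ z1 z2, x = fromWeierstrass P z1 z2 := by
  obtain ⟨v, rfl⟩ := (Matrix.mulVec_surjective_iff_isUnit.mpr hP) x
  refine ⟨fun i => v (finSumFinEquiv (Sum.inl i)), fun i => v (finSumFinEquiv (Sum.inr i)), ?_⟩
  congr 1
  ext i
  obtain ⟨j, rfl⟩ := finSumFinEquiv.surjective i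
  cases j <;> simp

theorem submatrix_mul_mul_mulVec_fromWeierstrass {n1 n2 : ℕ}
    (S M P : Matrix (Fin (n1 + n2)) (Fin (n1 + n2)) ℝ) (z1 : Fin n1 → ℝ) (z2 : Fin n2 → ℝ) :
    (S * M * P).submatrix finSumFinEquiv finSumFinEquiv *ᵥ Sum.elim z1 z2
      = (S *ᵥ (M *ᵥ fromWeierstrass P z1 z2)) ∘ finSumFinEquiv := by
  rw [Matrix.submatrix_mulVec_equiv, fromWeierstrass, Matrix.mulVec_mulVec, Matrix.mulVec_mulVec]
  rfl

theorem Matrix.submatrix_id_mulVec {l m n α : Type*} [Fintype n] [NonUnitalNonAssocSemiring α]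
    (M : Matrix m n α) (e : l → m) (v : n → α) : M.submatrix e id *ᵥ v = (M *ᵥ v) ∘ e :=
  rfl

theorem weierstrass_step {n1 n2 m q : ℕ} {E A S P : Matrix (Fin (n1 + n2)) (Fin (n1 + n2)) ℝ}
    {B : Matrix (Fin (n1 + n2)) (Fin m) ℝ} {F : Matrix (Fin (n1 + n2)) (Fin q) ℝ}
    {A1 : Matrix (Fin n1) (Fin n1) ℝ} {R : Matrix (Fin n2) (Fin n2) ℝ}
    {B1 : Matrix (Fin n1) (Fin m) ℝ} {B2 : Matrix (Fin n2) (Fin m) ℝ}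
    {F1 : Matrix (Fin n1) (Fin q) ℝ} {F2 : Matrix (Fin n2) (Fin q) ℝ}
    (hE : (S * E * P).submatrix finSumFinEquiv finSumFinEquiv = Matrix.fromBlocks 1 0 0 R)
    (hA : (S * A * P).submatrix finSumFinEquiv finSumFinEquiv = Matrix.fromBlocks A1 0 0 1)
    (hB : (S * B).submatrix finSumFinEquiv id = Matrix.fromRows B1 B2)
    (hF : (S * F).submatrix finSumFinEquiv id = Matrix.fromRows F1 F2)
    {x x' : Fin (n1 + n2) → ℝ} {z1 z1' : Fin n1 → ℝ} {z2 z2' : Fin n2 → ℝ} {u : Fin m → ℝ}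
    {η : Fin q → ℝ} (hx : x = fromWeierstrass P z1 z2) (hx' : x' = fromWeierstrass P z1' z2')
    (h : E *ᵥ x' = A *ᵥ x + B *ᵥ u + F *ᵥ η) :
    z1' = A1 *ᵥ z1 + B1 *ᵥ u + F1 *ᵥ η ∧ R *ᵥ z2' = z2 + B2 *ᵥ u + F2 *ᵥ η := by
  subst hx hx'
  have hblock : Matrix.fromBlocks 1 0 0 R *ᵥ Sum.elim z1' z2'
      = Matrix.fromBlocks A1 0 0 1 *ᵥ Sum.elim z1 z2 + Matrix.fromRows B1 B2 *ᵥ u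
        + Matrix.fromRows F1 F2 *ᵥ η := by
    rw [← hE, ← hA, ← hB, ← hF, submatrix_mul_mul_mulVec_fromWeierstrass,
      submatrix_mul_mul_mulVec_fromWeierstrass, Matrix.submatrix_id_mulVec,
      Matrix.submatrix_id_mulVec, h]
    ext i
    simp [Matrix.mulVec_add, Matrix.mulVec_mulVec]
  simpa [Matrix.fromBlocks_mulVec, Matrix.fromRows_mulVec, ← Sum.elim_add_add, Sum.elim_eq_iff]
    using hblock

theorem eq_neg_sum_of_pow_eq_zero {ι α : Type*} [Fintype ι] [DecidableEq ι] [Ring α]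
    {R : Matrix ι ι α} {s : ℕ} (hR : R ^ s = 0) {z v : ℕ → ι → α}
    (h : ∀ k, R *ᵥ z (k + 1) = z k + v k) (k : ℕ) :
    z k = -∑ j ∈ Finset.range s, R ^ j *ᵥ v (k + j) := by
  have hiter : ∀ t, z k = R ^ t *ᵥ z (k + t) - ∑ j ∈ Finset.range t, R ^ j *ᵥ v (k + j) := by
    intro t
    induction t with
    | zero => simp
    | succ t ih =>
      have hzt : z (k + t) = R *ᵥ z (k + t + 1) - v (k + t) := by rw [h]; abel
      rw [ih, Finset.sum_range_succ, hzt, Matrix.mulVec_sub, Matrix.mulVec_mulVec, ← pow_succ,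
        ← add_assoc]
      abel
  rw [hiter s, hR, Matrix.zero_mulVec, zero_sub]

theorem exists_weierstrass_trajectory {n1 n2 m q s : ℕ}
    {E A S P : Matrix (Fin (n1 + n2)) (Fin (n1 + n2)) ℝ}
    {B : Matrix (Fin (n1 + n2)) (Fin m) ℝ} {F : Matrix (Fin (n1 + n2)) (Fin q) ℝ}
    {A1 : Matrix (Fin n1) (Fin n1) ℝ} {R : Matrix (Fin n2) (Fin n2) ℝ}
    {B1 : Matrix (Fin n1) (Fin m) ℝ} {B2 : Matrix (Fin n2) (Fin m) ℝ}
    {F1 : Matrix (Fin n1) (Fin q) ℝ} {F2 : Matrix (Fin n2) (Fin q) ℝ} (hP : IsUnit P)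
    (hR : R ^ s = 0)
    (hE : (S * E * P).submatrix finSumFinEquiv finSumFinEquiv = Matrix.fromBlocks 1 0 0 R)
    (hA : (S * A * P).submatrix finSumFinEquiv finSumFinEquiv = Matrix.fromBlocks A1 0 0 1)
    (hB : (S * B).submatrix finSumFinEquiv id = Matrix.fromRows B1 B2)
    (hF : (S * F).submatrix finSumFinEquiv id = Matrix.fromRows F1 F2)
    {x : ℕ → Fin (n1 + n2) → ℝ} {u : ℕ → Fin m → ℝ} {η : ℕ → Fin q → ℝ}
    (h : ∀ k, E *ᵥ x (k + 1) = A *ᵥ x k + B *ᵥ u k + F *ᵥ η k) :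
    ∃ (z1 : ℕ → Fin n1 → ℝ) (z2 : ℕ → Fin n2 → ℝ), (∀ k, x k = fromWeierstrass P (z1 k) (z2 k))
      ∧ (∀ k, z1 (k + 1) = A1 *ᵥ z1 k + B1 *ᵥ u k + F1 *ᵥ η k)
      ∧ ∀ k, z2 k = -∑ j ∈ Finset.range s, R ^ j *ᵥ (B2 *ᵥ u (k + j) + F2 *ᵥ η (k + j)) := by
  choose z1 z2 hx using fun k => exists_eq_fromWeierstrass hP (x k)
  have hstep k := weierstrass_step hE hA hB hF (hx k) (hx (k + 1)) (h k)
  refine ⟨z1, z2, hx, fun k => (hstep k).1, ?_⟩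
  exact eq_neg_sum_of_pow_eq_zero hR (v := fun k => B2 *ᵥ u k + F2 *ᵥ η k) fun k =>
    (hstep k).2.trans (add_assoc _ _ _)

def weierstrassLin {n1 n2 : ℕ} (P : Matrix (Fin (n1 + n2)) (Fin (n1 + n2)) ℝ) :
    (Fin n1 → ℝ) × (Fin n2 → ℝ) →ₗ[ℝ] Fin (n1 + n2) → ℝ :=
  P.mulVecLin ∘ₗ LinearMap.funLeft ℝ ℝ finSumFinEquiv.symm ∘ₗ
    (LinearEquiv.sumArrowLequivProdArrow _ _ ℝ ℝ).symm.toLinearMap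

theorem weierstrassLin_apply {n1 n2 : ℕ} (P : Matrix (Fin (n1 + n2)) (Fin (n1 + n2)) ℝ)
    (z : (Fin n1 → ℝ) × (Fin n2 → ℝ)) : weierstrassLin P z = fromWeierstrass P z.1 z.2 :=
  rfl

section Window

variable {n1 n2 m q : ℕ} (s : ℕ)

abbrev WindowSpace (n1 m q s : ℕ) : Type := Fin n1 ⊕ (Fin (s + 1) × (Fin m ⊕ Fin q)) → ℝ

-- `window s z1 u η k` is the `k`-th column of the persistent-excitation matrix.
def window (z1 : ℕ → Fin n1 → ℝ) (u : ℕ → Fin m → ℝ) (η : ℕ → Fin q → ℝ) (k : ℕ) :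
    WindowSpace n1 m q s :=
  Sum.elim (z1 k) fun jl => Sum.elim (u (k + jl.1)) (η (k + jl.1)) jl.2

def windowSlow : WindowSpace n1 m q s →ₗ[ℝ] Fin n1 → ℝ :=
  LinearMap.funLeft ℝ ℝ Sum.inl

def windowInput (j : Fin (s + 1)) : WindowSpace n1 m q s →ₗ[ℝ] Fin m → ℝ :=
  LinearMap.funLeft ℝ ℝ fun i => Sum.inr (j, Sum.inl i)

def windowUnknown (j : Fin (s + 1)) : WindowSpace n1 m q s →ₗ[ℝ] Fin q → ℝ :=
  LinearMap.funLeft ℝ ℝ fun i => Sum.inr (j, Sum.inr i)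

variable (R : Matrix (Fin n2) (Fin n2) ℝ) (B2 : Matrix (Fin n2) (Fin m) ℝ)
  (F2 : Matrix (Fin n2) (Fin q) ℝ)

-- The fast state read off a window; `o = Fin.castSucc` gives `z₂(k)`, `o = Fin.succ` gives
-- `z₂(k+1)`.
def windowFast (o : Fin s → Fin (s + 1)) : WindowSpace n1 m q s →ₗ[ℝ] Fin n2 → ℝ :=
  -∑ j : Fin s, (R ^ (j : ℕ)).mulVecLin ∘ₗ
    (B2.mulVecLin ∘ₗ windowInput s (o j) + F2.mulVecLin ∘ₗ windowUnknown s (o j))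

variable (P : Matrix (Fin (n1 + n2)) (Fin (n1 + n2)) ℝ)
  (A1 : Matrix (Fin n1) (Fin n1) ℝ) (B1 : Matrix (Fin n1) (Fin m) ℝ)
  (F1 : Matrix (Fin n1) (Fin q) ℝ)

def windowState : WindowSpace n1 m q s →ₗ[ℝ] Fin (n1 + n2) → ℝ :=
  weierstrassLin P ∘ₗ (windowSlow s).prod (windowFast s R B2 F2 Fin.castSucc)

def windowNextState : WindowSpace n1 m q s →ₗ[ℝ] Fin (n1 + n2) → ℝ :=
  weierstrassLin P ∘ₗ
    (A1.mulVecLin ∘ₗ windowSlow s + B1.mulVecLin ∘ₗ windowInput s 0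
      + F1.mulVecLin ∘ₗ windowUnknown s 0).prod (windowFast s R B2 F2 Fin.succ)

variable {s} (z1 : ℕ → Fin n1 → ℝ) (u : ℕ → Fin m → ℝ) (η : ℕ → Fin q → ℝ) (k : ℕ)

theorem windowInput_zero_window : windowInput s 0 (window s z1 u η k) = u k :=
  rfl

theorem windowFast_window {o : Fin s → Fin (s + 1)} {k' : ℕ} (ho : ∀ j, k + o j = k' + j) :
    windowFast s R B2 F2 o (window s z1 u η k)
      = -∑ j ∈ Finset.range s, R ^ j *ᵥ (B2 *ᵥ u (k' + j) + F2 *ᵥ η (k' + j)) := by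
  rw [← Fin.sum_univ_eq_sum_range (fun j => R ^ j *ᵥ (B2 *ᵥ u (k' + j) + F2 *ᵥ η (k' + j)))]
  simp only [windowFast, LinearMap.neg_apply, LinearMap.coe_sum, Finset.sum_apply,
    LinearMap.comp_apply, LinearMap.add_apply, Matrix.mulVecLin_apply]
  congr 1
  refine Finset.sum_congr rfl fun j _ => ?_
  rw [← ho]
  rfl

theorem windowState_window :
    windowState s R B2 F2 P (window s z1 u η k)
      = fromWeierstrass P (z1 k)
          (-∑ j ∈ Finset.range s, R ^ j *ᵥ (B2 *ᵥ u (k + j) + F2 *ᵥ η (k + j))) := by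
  rw [← windowFast_window R B2 F2 z1 u η k (o := Fin.castSucc) fun _ => rfl]
  rfl

theorem windowNextState_window :
    windowNextState s R B2 F2 P A1 B1 F1 (window s z1 u η k)
      = fromWeierstrass P (A1 *ᵥ z1 k + B1 *ᵥ u k + F1 *ᵥ η k)
          (-∑ j ∈ Finset.range s, R ^ j *ᵥ (B2 *ᵥ u (k + 1 + j) + F2 *ᵥ η (k + 1 + j))) := by
  rw [← windowFast_window R B2 F2 z1 u η k (o := Fin.succ) fun j => by
    simp only [Fin.val_succ]; ring]
  rfl

end Window

theorem stmt_11_general (n1 n2 s m p q T : ℕ)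
    (E A : Matrix (Fin (n1 + n2)) (Fin (n1 + n2)) ℝ)
    (B : Matrix (Fin (n1 + n2)) (Fin m) ℝ)
    (F : Matrix (Fin (n1 + n2)) (Fin q) ℝ)
    (C : Matrix (Fin p) (Fin (n1 + n2)) ℝ)
    (S P : Matrix (Fin (n1 + n2)) (Fin (n1 + n2)) ℝ)
    (hP : IsUnit P)
    (A1 : Matrix (Fin n1) (Fin n1) ℝ) (R : Matrix (Fin n2) (Fin n2) ℝ)
    (B1 : Matrix (Fin n1) (Fin m) ℝ) (B2 : Matrix (Fin n2) (Fin m) ℝ)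
    (F1 : Matrix (Fin n1) (Fin q) ℝ) (F2 : Matrix (Fin n2) (Fin q) ℝ)
    (hR : R ^ s = 0)
    (hE : (S * E * P).submatrix ⇑finSumFinEquiv ⇑finSumFinEquiv = Matrix.fromBlocks 1 0 0 R)
    (hA : (S * A * P).submatrix ⇑finSumFinEquiv ⇑finSumFinEquiv = Matrix.fromBlocks A1 0 0 1)
    (hB : (S * B).submatrix ⇑finSumFinEquiv id = Matrix.fromRows B1 B2)
    (hFdec : (S * F).submatrix ⇑finSumFinEquiv id = Matrix.fromRows F1 F2)
    (ud : ℕ → Fin m → ℝ) (etad : ℕ → Fin q → ℝ)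
    (z1d : ℕ → Fin n1 → ℝ) (z2d : ℕ → Fin n2 → ℝ)
    (xd : ℕ → Fin (n1 + n2) → ℝ) (yd : ℕ → Fin p → ℝ)
    (hz1 : ∀ k < T, z1d (k + 1) = A1 *ᵥ z1d k + B1 *ᵥ ud k + F1 *ᵥ etad k)
    (hz2 : ∀ k ≤ T, z2d k
      = -(∑ j ∈ Finset.range s, (R ^ j *ᵥ (B2 *ᵥ ud (k + j) + F2 *ᵥ etad (k + j)))))
    (hxd : ∀ k ≤ T, xd k = P *ᵥ (fun i => Sum.elim (z1d k) (z2d k) (finSumFinEquiv.symm i)))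
    (hyd : ∀ k ≤ T, yd k = C *ᵥ xd k)
    (hPE : (Matrix.of fun (i : Fin n1 ⊕ (Fin (s + 1) × (Fin m ⊕ Fin q))) (k : Fin T) =>
        Sum.elim (z1d (k : ℕ))
          (fun jl => Sum.elim (ud ((k : ℕ) + (jl.1 : ℕ))) (etad ((k : ℕ) + (jl.1 : ℕ))) jl.2)
          i).rank = n1 + (s + 1) * (m + q))
    (SXp : Matrix (Fin (n1 + n2)) (Fin (n1 + n2)) ℝ)
    (SUp : Matrix (Fin (n1 + n2)) (Fin m) ℝ)
    (SYp SYf : Matrix (Fin (n1 + n2)) (Fin p) ℝ)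
    (hSig : histMat T xd 1 = SXp * histMat T xd 0 + SUp * histMat T ud 0
      + SYp * histMat T yd 0 + SYf * histMat T yd 1)
    (hSchur : SchurStable SXp)
    (u : ℕ → Fin m → ℝ) (x : ℕ → Fin (n1 + n2) → ℝ) (y : ℕ → Fin p → ℝ)
    (η : ℕ → Fin q → ℝ)
    (htraj1 : ∀ k : ℕ, E *ᵥ x (k + 1) = A *ᵥ x k + B *ᵥ u k + F *ᵥ η k)
    (htraj2 : ∀ k : ℕ, y k = C *ᵥ x k)
    (xhat : ℕ → Fin (n1 + n2) → ℝ)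
    (hobs : ∀ k : ℕ, xhat (k + 1)
      = SXp *ᵥ xhat k + SUp *ᵥ u k + SYp *ᵥ y k + SYf *ᵥ y (k + 1)) :
    Filter.Tendsto (fun k => ‖x k - xhat k‖) Filter.atTop (nhds 0) := by
  obtain ⟨z1, z2, hx, hslow, hfast⟩ :=
    exists_weierstrass_trajectory hP hR hE hA hB hFdec htraj1
  set Λ := windowState s R B2 F2 P
  set Λ' := windowNextState s R B2 F2 P A1 B1 F1
  have hwin : Λ' = SXp.mulVecLin ∘ₗ Λ + SUp.mulVecLin ∘ₗ windowInput s 0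
      + (SYp * C).mulVecLin ∘ₗ Λ + (SYf * C).mulVecLin ∘ₗ Λ' := by
    refine LinearMap.ext_of_rank_histMat (W := window s z1d ud etad) (hPE.trans (by simp))
      fun t ht => ?_
    have hx0 : Λ (window s z1d ud etad t) = xd t := by
      rw [windowState_window, ← hz2 t ht.le]; exact (hxd t ht.le).symm
    have hx1 : Λ' (window s z1d ud etad t) = xd (t + 1) := by
      rw [windowNextState_window, ← hz1 t ht, ← hz2 (t + 1) ht]; exact (hxd (t + 1) ht).symm
    simp only [LinearMap.add_apply, LinearMap.comp_apply, Matrix.mulVecLin_apply, hx0, hx1,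
      windowInput_zero_window, ← Matrix.mulVec_mulVec, ← hyd t ht.le, ← hyd (t + 1) ht]
    exact succ_eq_of_histMat_eq hSig ht
  have hkey k : x (k + 1) = SXp *ᵥ x k + SUp *ᵥ u k + SYp *ᵥ y k + SYf *ᵥ y (k + 1) := by
    have hx0 : Λ (window s z1 u η k) = x k := by rw [windowState_window, ← hfast k, hx k]
    have hx1 : Λ' (window s z1 u η k) = x (k + 1) := by
      rw [windowNextState_window, ← hslow k, ← hfast (k + 1), hx (k + 1)]
    simpa only [LinearMap.add_apply, LinearMap.comp_apply, Matrix.mulVecLin_apply, hx0, hx1,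
      windowInput_zero_window, ← Matrix.mulVec_mulVec, ← htraj2] using
      LinearMap.congr_fun hwin (window s z1 u η k)
  exact hSchur.tendsto_norm_of_mulVec_succ fun k => by
    rw [hkey, hobs, Matrix.mulVec_sub]
    abel

theorem stmt_11 (n1 n2 s m p q T : ℕ) (hs : 1 ≤ s) (hT : 1 ≤ T)
    (E A : Matrix (Fin (n1 + n2)) (Fin (n1 + n2)) ℝ)
    (B : Matrix (Fin (n1 + n2)) (Fin m) ℝ)
    (F : Matrix (Fin (n1 + n2)) (Fin q) ℝ) (hF : F.rank = q)
    (C : Matrix (Fin p) (Fin (n1 + n2)) ℝ)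
    (S P : Matrix (Fin (n1 + n2)) (Fin (n1 + n2)) ℝ)
    (hS : IsUnit S) (hP : IsUnit P)
    (A1 : Matrix (Fin n1) (Fin n1) ℝ) (R : Matrix (Fin n2) (Fin n2) ℝ)
    (B1 : Matrix (Fin n1) (Fin m) ℝ) (B2 : Matrix (Fin n2) (Fin m) ℝ)
    (F1 : Matrix (Fin n1) (Fin q) ℝ) (F2 : Matrix (Fin n2) (Fin q) ℝ)
    (C1 : Matrix (Fin p) (Fin n1) ℝ) (C2 : Matrix (Fin p) (Fin n2) ℝ)
    (hR : R ^ s = 0)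
    (hE : (S * E * P).submatrix ⇑finSumFinEquiv ⇑finSumFinEquiv = Matrix.fromBlocks 1 0 0 R)
    (hA : (S * A * P).submatrix ⇑finSumFinEquiv ⇑finSumFinEquiv = Matrix.fromBlocks A1 0 0 1)
    (hB : (S * B).submatrix ⇑finSumFinEquiv id = Matrix.fromRows B1 B2)
    (hFdec : (S * F).submatrix ⇑finSumFinEquiv id = Matrix.fromRows F1 F2)
    (hC : (C * P).submatrix id ⇑finSumFinEquiv = Matrix.fromCols C1 C2)
    (ud : ℕ → Fin m → ℝ) (etad : ℕ → Fin q → ℝ)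
    (z1d : ℕ → Fin n1 → ℝ) (z2d : ℕ → Fin n2 → ℝ)
    (xd : ℕ → Fin (n1 + n2) → ℝ) (yd : ℕ → Fin p → ℝ)
    (hz1 : ∀ k < T, z1d (k + 1) = A1 *ᵥ z1d k + B1 *ᵥ ud k + F1 *ᵥ etad k)
    (hz2 : ∀ k ≤ T, z2d k
      = -(∑ j ∈ Finset.range s, (R ^ j *ᵥ (B2 *ᵥ ud (k + j) + F2 *ᵥ etad (k + j)))))
    (hxd : ∀ k ≤ T, xd k = P *ᵥ (fun i => Sum.elim (z1d k) (z2d k) (finSumFinEquiv.symm i)))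
    (hyd : ∀ k ≤ T, yd k = C *ᵥ xd k)
    (hPE : (Matrix.of fun (i : Fin n1 ⊕ (Fin (s + 1) × (Fin m ⊕ Fin q))) (k : Fin T) =>
        Sum.elim (z1d (k : ℕ))
          (fun jl => Sum.elim (ud ((k : ℕ) + (jl.1 : ℕ))) (etad ((k : ℕ) + (jl.1 : ℕ))) jl.2)
          i).rank = n1 + (s + 1) * (m + q))
    (hker : ∀ g : Fin T → ℝ, histMat T xd 0 *ᵥ g = 0 → histMat T ud 0 *ᵥ g = 0 →
      histMat T yd 0 *ᵥ g = 0 → histMat T yd 1 *ᵥ g = 0 → histMat T xd 1 *ᵥ g = 0)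
    (SXp : Matrix (Fin (n1 + n2)) (Fin (n1 + n2)) ℝ)
    (SUp : Matrix (Fin (n1 + n2)) (Fin m) ℝ)
    (SYp SYf : Matrix (Fin (n1 + n2)) (Fin p) ℝ)
    (hSig : histMat T xd 1 = SXp * histMat T xd 0 + SUp * histMat T ud 0
      + SYp * histMat T yd 0 + SYf * histMat T yd 1)
    (hSchur : SchurStable SXp)
    (u : ℕ → Fin m → ℝ) (x : ℕ → Fin (n1 + n2) → ℝ) (y : ℕ → Fin p → ℝ)
    (η : ℕ → Fin q → ℝ)
    (htraj1 : ∀ k : ℕ, E *ᵥ x (k + 1) = A *ᵥ x k + B *ᵥ u k + F *ᵥ η k)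
    (htraj2 : ∀ k : ℕ, y k = C *ᵥ x k)
    (xhat : ℕ → Fin (n1 + n2) → ℝ)
    (hobs : ∀ k : ℕ, xhat (k + 1)
      = SXp *ᵥ xhat k + SUp *ᵥ u k + SYp *ᵥ y k + SYf *ᵥ y (k + 1)) :
    Filter.Tendsto (fun k => ‖x k - xhat k‖) Filter.atTop (nhds 0) :=
  stmt_11_general n1 n2 s m p q T E A B F C S P hP A1 R B1 B2 F1 F2 hR hE hA hB hFdec ud etad z1d
    z2d xd yd hz1 hz2 hxd hyd hPE SXp SUp SYp SYf hSig hSchur u x y η htraj1 htraj2 xhat hobs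
end
end

section
/- Let E, A ∈ ℝ^{n×n}, B ∈ ℝ^{n×m}, F ∈ ℝ^{n×q} with rank(F) = q, and C ∈ ℝ^{p×n}, and assume the (n+p) × (n+q) block matrix [[E, F], [C, 0]] has rank n + q. Then, for historical data generated by the unknown-input descriptor system, every g ∈ ℝ^T with X_p·g = 0, U_p·g = 0 and Y_f·g = 0 satisfies X_f·g = 0. -/
/-! Stacking the data equations gives `E X_f = A X_p + B U_p + F H_p` and `C X_f = Y_f`, with
`H_p` the data matrix of the unknown input `η_d`. For `g` in the kernels of `X_p`, `U_p`, `Y_f`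
this yields `E (X_f g) = F (H_p g)` and `C (X_f g) = 0`, so `(X_f g, -H_p g)` lies in the kernel of
`[[E, F], [C, 0]]`, which is trivial because that matrix has full column rank. -/

open Matrix

noncomputable section

theorem Matrix.mulVec_injective_of_rank_eq_card {K : Type*} [Field K] {a b : Type*}
    [Fintype b] {M : Matrix a b K} (h : M.rank = Fintype.card b) :
    Function.Injective M.mulVec := by
  have hker : LinearMap.ker M.mulVecLin = ⊥ := by
    have := M.mulVecLin.finrank_range_add_finrank_ker
    rw [← Matrix.rank, h, Module.finrank_fintype_fun_eq_card] at this
    exact Submodule.finrank_eq_zero.mp (by omega)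
  exact LinearMap.ker_eq_bot.mp hker

theorem histMat_congr {ι : Type} {T off off' : ℕ} {f f' : ℕ → ι → ℝ}
    (h : ∀ k < T, f (k + off) = f' (k + off')) : histMat T f off = histMat T f' off' := by
  ext i k
  simp [histMat, h k k.isLt]

theorem histMat_mulVec_left {ι κ : Type} [Fintype ι] (T off : ℕ) (M : Matrix κ ι ℝ)
    (f : ℕ → ι → ℝ) : histMat T (fun k => M *ᵥ f k) off = M * histMat T f off := by
  ext i k
  simp [histMat, Matrix.mul_apply, Matrix.mulVec, dotProduct]

theorem histMat_add {ι : Type} (T off : ℕ) (f f' : ℕ → ι → ℝ) :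
    histMat T (f + f') off = histMat T f off + histMat T f' off := rfl

theorem Matrix.eq_zero_of_rank_fromBlocks_eq {K : Type*} [Field K] {a l r o : Type*}
    [Fintype l] [Fintype r]
    {E : Matrix a l K} {F : Matrix a r K} {C : Matrix o l K}
    (h : (fromBlocks E F C 0).rank = Fintype.card l + Fintype.card r)
    {v : l → K} {w : r → K} (hE : E *ᵥ v = F *ᵥ w) (hC : C *ᵥ v = 0) : v = 0 := by
  have hker : fromBlocks E F C 0 *ᵥ Sum.elim v (-w) = 0 := by
    simp [fromBlocks_mulVec, hE, hC, mulVec_neg]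
  have hvw : Sum.elim v (-w) = 0 :=
    mulVec_injective_of_rank_eq_card (by rwa [Fintype.card_sum]) (by rw [hker, mulVec_zero])
  funext i
  simpa using congrFun hvw (Sum.inl i)

section DescriptorData

variable {n m p q T : ℕ} {E A : Matrix (Fin n) (Fin n) ℝ} {B : Matrix (Fin n) (Fin m) ℝ}
  {F : Matrix (Fin n) (Fin q) ℝ} {C : Matrix (Fin p) (Fin n) ℝ}
  {xd : ℕ → Fin n → ℝ} {ud : ℕ → Fin m → ℝ} {etad : ℕ → Fin q → ℝ} {yd : ℕ → Fin p → ℝ}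

theorem descriptor_histMat_eq
    (hdyn : ∀ k < T, E *ᵥ xd (k + 1) = A *ᵥ xd k + B *ᵥ ud k + F *ᵥ etad k) :
    E * histMat T xd 1 =
      A * histMat T xd 0 + B * histMat T ud 0 + F * histMat T etad 0 := by
  simp only [← histMat_mulVec_left, ← histMat_add]
  exact histMat_congr hdyn

theorem output_histMat_eq (hyd : ∀ k ≤ T, yd k = C *ᵥ xd k) :
    C * histMat T xd 1 = histMat T yd 1 := by
  rw [← histMat_mulVec_left]
  exact histMat_congr fun k hk => (hyd (k + 1) hk).symm

end DescriptorData

theorem stmt_14_general (n m p q T : ℕ)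
    (E A : Matrix (Fin n) (Fin n) ℝ) (B : Matrix (Fin n) (Fin m) ℝ)
    (F : Matrix (Fin n) (Fin q) ℝ)
    (C : Matrix (Fin p) (Fin n) ℝ)
    (hblk : (Matrix.fromBlocks E F C 0).rank = n + q)
    (xd : ℕ → Fin n → ℝ) (ud : ℕ → Fin m → ℝ) (etad : ℕ → Fin q → ℝ)
    (yd : ℕ → Fin p → ℝ)
    (hdyn : ∀ k < T, E *ᵥ xd (k + 1) = A *ᵥ xd k + B *ᵥ ud k + F *ᵥ etad k)
    (hyd : ∀ k ≤ T, yd k = C *ᵥ xd k) :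
    ∀ g : Fin T → ℝ, histMat T xd 0 *ᵥ g = 0 → histMat T ud 0 *ᵥ g = 0 →
      histMat T yd 1 *ᵥ g = 0 → histMat T xd 1 *ᵥ g = 0 := by
  intro g hXp hUp hYf
  have hE : E *ᵥ (histMat T xd 1 *ᵥ g) = F *ᵥ (histMat T etad 0 *ᵥ g) := by
    rw [mulVec_mulVec, descriptor_histMat_eq hdyn]
    simp only [add_mulVec, ← mulVec_mulVec, hXp, hUp, mulVec_zero, zero_add]
  have hC : C *ᵥ (histMat T xd 1 *ᵥ g) = 0 := by
    rw [mulVec_mulVec, output_histMat_eq hyd, hYf]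
  exact eq_zero_of_rank_fromBlocks_eq (by simpa using hblk) hE hC

theorem stmt_14 (n m p q T : ℕ) (hT : 1 ≤ T)
    (E A : Matrix (Fin n) (Fin n) ℝ) (B : Matrix (Fin n) (Fin m) ℝ)
    (F : Matrix (Fin n) (Fin q) ℝ) (hF : F.rank = q)
    (C : Matrix (Fin p) (Fin n) ℝ)
    (hblk : (Matrix.fromBlocks E F C 0).rank = n + q)
    (xd : ℕ → Fin n → ℝ) (ud : ℕ → Fin m → ℝ) (etad : ℕ → Fin q → ℝ)
    (yd : ℕ → Fin p → ℝ)
    (hdyn : ∀ k < T, E *ᵥ xd (k + 1) = A *ᵥ xd k + B *ᵥ ud k + F *ᵥ etad k)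
    (hyd : ∀ k ≤ T, yd k = C *ᵥ xd k) :
    ∀ g : Fin T → ℝ, histMat T xd 0 *ᵥ g = 0 → histMat T ud 0 *ᵥ g = 0 →
      histMat T yd 1 *ᵥ g = 0 → histMat T xd 1 *ᵥ g = 0 :=
  stmt_14_general n m p q T E A B F C hblk xd ud etad yd hdyn hyd
end
end

section
/- Assume the unknown-input Weierstrass decomposition, unknown-input historical data, and unknown-input persistent excitation hypotheses, and assume the (n+p) × (n+q) block matrix [[E, F], [C, 0]] has rank n + q. If for every λ ∈ ℂ with |λ| ≥ 1 the rank over ℂ of col(λ·X_p − X_f, U_p, Y_p, Y_f) equals the rank of col(X_p, U_p, Y_f), then for every λ ∈ ℂ with |λ| ≥ 1 the rank over ℂ of the (n+p) × (n+q) block matrix [[λ·E − A, −F], [C, 0]] equals n + q. -/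
/-!
Write `M₁ = col(λX_p − X_f, U_p, Y_p, Y_f)` and `M₂ = col(X_p, U_p, Y_f)`. Combining the columns
of the historical data with weights `v` gives a (complex) trajectory on the time window `{0, 1}`
whose states, inputs and outputs are `X_p v, X_f v, U_p v, …`.

If `M₂ v = 0`, that trajectory has `x(0) = 0`, `u(0) = 0` and `y(1) = 0`. In Weierstrass
coordinates this gives `E x(1) = F η(0)` and `C x(1) = 0`, so `x(1) = 0` because `[[E, F], [C, 0]]`
has full column rank, and hence `M₁ v = 0`. So `ker M₂ ⊆ ker M₁`, and the rank hypothesis makes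
the two kernels equal.

Now suppose `(λE − A) x = F η` and `C x = 0` with `(x, η) ≠ 0`. Persistent excitation yields a `v`
whose trajectory has the slow part of `x` as initial slow state, input `u = 0` and unknown input
`η(k) = λ^k η`. Because `R` is nilpotent, its fast part is that of `x`, so `x(0) = x` and
`x(1) = λ x`. Then `M₁ v = 0` but `M₂ v ≠ 0`: `x = 0` would force `F η = 0` and so `η = 0`.
This contradicts the equality of the kernels.
-/

open Matrix

noncomputable section

open Finset Function

namespace Matrix

variable {K : Type*} [Field K] {m n : Type*} [Fintype n]

theorem rank_eq_card_width_iff_mulVec_injective (A : Matrix m n K) :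
    A.rank = Fintype.card n ↔ Injective A.mulVec := by
  have h := LinearMap.finrank_range_add_finrank_ker A.mulVecLin
  rw [Module.finrank_fintype_fun_eq_card] at h
  rw [rank, ← coe_mulVecLin, ← LinearMap.ker_eq_bot, ← Submodule.finrank_eq_zero]
  omega

theorem mulVec_surjective_of_rank_eq_card_height [Fintype m] {A : Matrix m n K}
    (h : A.rank = Fintype.card m) : Surjective A.mulVec := by
  rw [← coe_mulVecLin, ← LinearMap.range_eq_top]
  apply Submodule.eq_top_of_finrank_eq
  rw [← rank, h, Module.finrank_fintype_fun_eq_card]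

theorem linearIndependent_row_iff_rank_eq_card_height [Fintype m] (A : Matrix m n K) :
    LinearIndependent K A.row ↔ A.rank = Fintype.card m := by
  rw [rank_eq_finrank_span_row, linearIndependent_iff_card_eq_finrank_span, Set.finrank, eq_comm]

theorem ker_mulVecLin_le_of_rank_eq {m' : Type*} [Fintype m'] {M₁ : Matrix m n K}
    {M₂ : Matrix m' n K} (hrank : M₁.rank = M₂.rank)
    (hle : LinearMap.ker M₂.mulVecLin ≤ LinearMap.ker M₁.mulVecLin) :
    LinearMap.ker M₁.mulVecLin ≤ LinearMap.ker M₂.mulVecLin := by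
  refine (Submodule.eq_of_le_of_finrank_eq hle ?_).ge
  have h₁ := LinearMap.finrank_range_add_finrank_ker M₁.mulVecLin
  have h₂ := LinearMap.finrank_range_add_finrank_ker M₂.mulVecLin
  rw [rank, rank] at hrank
  omega

variable {L : Type*} [Field L] [Algebra K L]

theorem rank_map_algebraMap_of_rank_eq_card_height [Fintype m] {A : Matrix m n K}
    (h : A.rank = Fintype.card m) : (A.map (algebraMap K L)).rank = Fintype.card m := by
  rw [← linearIndependent_row_iff_rank_eq_card_height] at h ⊢
  exact linearIndependent_algebraMap_comp_iff.mpr h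

theorem rank_map_algebraMap_of_rank_eq_card_width [Fintype m] {A : Matrix m n K}
    (h : A.rank = Fintype.card n) : (A.map (algebraMap K L)).rank = Fintype.card n := by
  rw [← rank_transpose] at h ⊢
  rw [← transpose_map]
  exact rank_map_algebraMap_of_rank_eq_card_height h

end Matrix

section FastSubsystem

variable {K ι : Type*} [CommRing K] [Fintype ι] [DecidableEq ι] (R : Matrix ι ι K) (s : ℕ)

/-- The fast state at time `0` of the nilpotent subsystem `R z(k+1) = z(k) + w(k)`. -/
def fastResponse (w : ℕ → ι → K) : ι → K :=
  -∑ j ∈ range s, R ^ j *ᵥ w j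

variable {R s}

theorem fastResponse_congr {w w' : ℕ → ι → K} (h : ∀ j < s, w j = w' j) :
    fastResponse R s w = fastResponse R s w' := by
  unfold fastResponse
  rw [sum_congr rfl fun j hj => by rw [h j (mem_range.mp hj)]]

theorem fastResponse_smul (c : K) (w : ℕ → ι → K) :
    fastResponse R s (fun j => c • w j) = c • fastResponse R s w := by
  simp only [fastResponse, mulVec_smul, ← smul_sum, smul_neg]

theorem mulVec_fastResponse_succ (hR : R ^ s = 0) (w : ℕ → ι → K) :
    R *ᵥ fastResponse R s (fun j => w (j + 1)) = fastResponse R s w + w 0 := by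
  have h := sum_range_succ' (fun j => R ^ j *ᵥ w j) s
  rw [sum_range_succ, hR, zero_mulVec, add_zero, pow_zero, one_mulVec] at h
  simp only [fastResponse, mulVec_neg, mulVec_sum, mulVec_mulVec, ← pow_succ']
  rw [h]
  abel

/-- `(cR - 1) z = f` is inverted by the finite geometric series of the nilpotent `cR`. -/
theorem eq_fastResponse_of_smul_mulVec_sub (hR : R ^ s = 0) {c : K} {z f : ι → K}
    (h : c • (R *ᵥ z) - z = f) : z = fastResponse R s (fun j => c ^ j • f) := by
  have hf : (c • R - 1) *ᵥ z = f := by rw [sub_mulVec, smul_mulVec, one_mulVec, h]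
  have key := congrArg (· *ᵥ z) (geom_sum_mul (c • R) s)
  simp only [smul_pow, hR, smul_zero, zero_sub, neg_mulVec, one_mulVec, ← mulVec_mulVec, hf,
    sum_mulVec] at key
  simp only [fastResponse, mulVec_smul, ← smul_mulVec, key, neg_neg]

end FastSubsystem

section Weierstrass

variable {K : Type*} [Field K] {ι ι₁ ι₂ κ μ π τ : Type*} [Fintype ι] [Fintype ι₁] [Fintype ι₂]
  [Fintype κ] [Fintype μ] [Fintype τ]

theorem mulVec_mulVec_mulVec_eq_sumElim {S : Matrix (ι₁ ⊕ ι₂) ι K} {M : Matrix ι ι K}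
    {P : Matrix ι (ι₁ ⊕ ι₂) K} {M₁ : Matrix ι₁ ι₁ K} {M₂ : Matrix ι₂ ι₂ K}
    (h : S * M * P = fromBlocks M₁ 0 0 M₂) (ξ : ι₁ ⊕ ι₂ → K) :
    S *ᵥ (M *ᵥ (P *ᵥ ξ)) = Sum.elim (M₁ *ᵥ (ξ ∘ Sum.inl)) (M₂ *ᵥ (ξ ∘ Sum.inr)) := by
  rw [mulVec_mulVec, mulVec_mulVec, h, fromBlocks_mulVec]
  simp

theorem eq_zero_of_fromBlocks_mulVec_injective {E : Matrix ι ι K} {F : Matrix ι κ K}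
    {C : Matrix π ι K} (hEFC : Injective (fromBlocks E F C (0 : Matrix π κ K)).mulVec)
    {x : ι → K} {η : κ → K} (h : E *ᵥ x = F *ᵥ η) (hC : C *ᵥ x = 0) : x = 0 ∧ η = 0 := by
  have h0 : fromBlocks E F C 0 *ᵥ Sum.elim x (-η) = fromBlocks E F C 0 *ᵥ 0 := by
    rw [fromBlocks_mulVec, mulVec_zero, ← Sum.elim_zero_zero]
    simp [h, hC, mulVec_neg]
  have hx := hEFC h0
  rwa [← Sum.elim_zero_zero, Sum.elim_eq_iff, neg_eq_zero] at hx

theorem mulVec_eq_fastResponse_of_eq [DecidableEq ι₂] {s k : ℕ} {R : Matrix ι₂ ι₂ K}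
    {B : Matrix ι₂ μ K} {F : Matrix ι₂ κ K} {Z : Matrix ι₂ τ K} {U : ℕ → Matrix μ τ K}
    {H : ℕ → Matrix κ τ K} (hZ : Z = -∑ j ∈ range s, R ^ j * (B * U (j + k) + F * H (j + k)))
    (v : τ → K) :
    Z *ᵥ v = fastResponse R s fun j => B *ᵥ (U (j + k) *ᵥ v) + F *ᵥ (H (j + k) *ᵥ v) := by
  simp only [hZ, fastResponse, neg_mulVec, sum_mulVec, add_mulVec, mulVec_add, mulVec_mulVec,
    Matrix.mul_add]

variable [DecidableEq ι₁] [DecidableEq ι₂]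

/-- The change of coordinates `(S, P)` of a Weierstrass decomposition, with the splitting into
slow and fast coordinates built into the index type `ι₁ ⊕ ι₂`. -/
structure WeierstrassForm (E A : Matrix ι ι K) (F : Matrix ι κ K) (S : Matrix (ι₁ ⊕ ι₂) ι K)
    (P : Matrix ι (ι₁ ⊕ ι₂) K) (A₁ : Matrix ι₁ ι₁ K) (R : Matrix ι₂ ι₂ K) (F₁ : Matrix ι₁ κ K)
    (F₂ : Matrix ι₂ κ K) : Prop where
  injective_S : Injective S.mulVec
  bijective_P : Bijective P.mulVec
  E_eq : S * E * P = fromBlocks 1 0 0 R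
  A_eq : S * A * P = fromBlocks A₁ 0 0 1
  F_eq : S * F = fromRows F₁ F₂

namespace WeierstrassForm

variable {E A : Matrix ι ι K} {F : Matrix ι κ K} {C : Matrix π ι K} {S : Matrix (ι₁ ⊕ ι₂) ι K}
  {P : Matrix ι (ι₁ ⊕ ι₂) K} {A₁ : Matrix ι₁ ι₁ K} {R : Matrix ι₂ ι₂ K} {B₁ : Matrix ι₁ μ K}
  {B₂ : Matrix ι₂ μ K} {F₁ : Matrix ι₁ κ K} {F₂ : Matrix ι₂ κ K} {s : ℕ}

theorem mulVec_F (hW : WeierstrassForm E A F S P A₁ R F₁ F₂) (η : κ → K) :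
    S *ᵥ (F *ᵥ η) = Sum.elim (F₁ *ᵥ η) (F₂ *ᵥ η) := by
  rw [mulVec_mulVec, hW.F_eq, fromRows_mulVec]

theorem pencil_eq (hW : WeierstrassForm E A F S P A₁ R F₁ F₂) {c : K} {ξ : ι₁ ⊕ ι₂ → K}
    {η : κ → K} (h : (c • E - A) *ᵥ (P *ᵥ ξ) = F *ᵥ η) :
    c • ξ ∘ Sum.inl - A₁ *ᵥ (ξ ∘ Sum.inl) = F₁ *ᵥ η ∧
      c • (R *ᵥ (ξ ∘ Sum.inr)) - ξ ∘ Sum.inr = F₂ *ᵥ η := by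
  have h' := congrArg (S *ᵥ ·) h
  simp only [sub_mulVec, smul_mulVec, mulVec_sub, mulVec_smul, hW.mulVec_F,
    mulVec_mulVec_mulVec_eq_sumElim hW.E_eq, mulVec_mulVec_mulVec_eq_sumElim hW.A_eq,
    one_mulVec] at h'
  constructor <;> funext i
  · simpa using congrFun h' (Sum.inl i)
  · simpa using congrFun h' (Sum.inr i)

section Trajectory

variable {ζ₁ : ℕ → ι₁ → K} {ζ₂ : ℕ → ι₂ → K} {u : ℕ → μ → K} {η : ℕ → κ → K}

theorem state_one_eq_zero (hW : WeierstrassForm E A F S P A₁ R F₁ F₂) (hR : R ^ s = 0)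
    (hEFC : Injective (fromBlocks E F C (0 : Matrix π κ K)).mulVec)
    (hζ₁ : ζ₁ 1 = A₁ *ᵥ ζ₁ 0 + B₁ *ᵥ u 0 + F₁ *ᵥ η 0)
    (hζ₂ : ∀ k ≤ 1, ζ₂ k = fastResponse R s fun j => B₂ *ᵥ u (j + k) + F₂ *ᵥ η (j + k))
    (hx₀ : P *ᵥ Sum.elim (ζ₁ 0) (ζ₂ 0) = 0) (hu₀ : u 0 = 0)
    (hy₁ : C *ᵥ (P *ᵥ Sum.elim (ζ₁ 1) (ζ₂ 1)) = 0) :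
    P *ᵥ Sum.elim (ζ₁ 1) (ζ₂ 1) = 0 := by
  have hζ₀ : Sum.elim (ζ₁ 0) (ζ₂ 0) = 0 := hW.bijective_P.1 (by rw [hx₀, mulVec_zero])
  rw [← Sum.elim_zero_zero, Sum.elim_eq_iff] at hζ₀
  have hslow : ζ₁ 1 = F₁ *ᵥ η 0 := by simp [hζ₁, hζ₀.1, hu₀]
  have hfast : R *ᵥ ζ₂ 1 = F₂ *ᵥ η 0 := by
    have h₀ := hζ₂ 0 zero_le_one
    simp only [add_zero] at h₀
    rw [hζ₂ 1 le_rfl, mulVec_fastResponse_succ hR (fun j => B₂ *ᵥ u j + F₂ *ᵥ η j), ← h₀,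
      hζ₀.2, hu₀]
    simp
  have hE : E *ᵥ (P *ᵥ Sum.elim (ζ₁ 1) (ζ₂ 1)) = F *ᵥ η 0 := by
    apply hW.injective_S
    rw [mulVec_mulVec_mulVec_eq_sumElim hW.E_eq, hW.mulVec_F]
    simp [hslow, hfast]
  exact (eq_zero_of_fromBlocks_mulVec_injective hEFC hE hy₁).1

theorem trajectory_eq_of_pencil (hW : WeierstrassForm E A F S P A₁ R F₁ F₂) (hR : R ^ s = 0)
    {c : K} {ξ : ι₁ ⊕ ι₂ → K} {η₀ : κ → K} (hpencil : (c • E - A) *ᵥ (P *ᵥ ξ) = F *ᵥ η₀)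
    (hζ₁ : ζ₁ 1 = A₁ *ᵥ ζ₁ 0 + B₁ *ᵥ u 0 + F₁ *ᵥ η 0)
    (hζ₂ : ∀ k ≤ 1, ζ₂ k = fastResponse R s fun j => B₂ *ᵥ u (j + k) + F₂ *ᵥ η (j + k))
    (hξ : ζ₁ 0 = ξ ∘ Sum.inl) (hu : ∀ k ≤ s, u k = 0) (hη : ∀ k ≤ s, η k = c ^ k • η₀) :
    Sum.elim (ζ₁ 0) (ζ₂ 0) = ξ ∧ Sum.elim (ζ₁ 1) (ζ₂ 1) = c • ξ := by
  obtain ⟨hslow, hfast⟩ := hW.pencil_eq hpencil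
  have hζ₂' : ∀ k ≤ 1, ζ₂ k = fastResponse R s fun j => c ^ k • c ^ j • F₂ *ᵥ η₀ := by
    intro k hk
    rw [hζ₂ k hk]
    refine fastResponse_congr fun j hj => ?_
    rw [hu _ (by omega), hη _ (by omega), mulVec_zero, zero_add, mulVec_smul, pow_add, mul_smul,
      smul_comm (c ^ j)]
  have hfast₀ : ζ₂ 0 = ξ ∘ Sum.inr := by
    rw [eq_fastResponse_of_smul_mulVec_sub hR hfast, hζ₂' 0 zero_le_one]
    simp
  have hfast₁ : ζ₂ 1 = c • ζ₂ 0 := by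
    rw [hζ₂' 1 le_rfl, hζ₂' 0 zero_le_one]
    simp only [pow_zero, one_smul, pow_one, fastResponse_smul]
  have hslow₁ : ζ₁ 1 = c • ζ₁ 0 := by
    rw [hζ₁, hu 0 (Nat.zero_le s), hη 0 (Nat.zero_le s), hξ, pow_zero, one_smul, mulVec_zero,
      add_zero, ← hslow]
    abel
  refine ⟨by rw [hξ, hfast₀, Sum.elim_comp_inl_inr], ?_⟩
  rw [hslow₁, hfast₁, hξ, hfast₀]
  funext i
  cases i <;> rfl

end Trajectory

section DataMatrices

variable {Z₁ : ℕ → Matrix ι₁ τ K} {Z₂ : ℕ → Matrix ι₂ τ K} {U : ℕ → Matrix μ τ K}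
  {H : ℕ → Matrix κ τ K} {X : ℕ → Matrix ι τ K} {Y : ℕ → Matrix π τ K}

theorem dataMatrix_mulVec_eq_zero (hW : WeierstrassForm E A F S P A₁ R F₁ F₂) (hR : R ^ s = 0)
    (hEFC : Injective (fromBlocks E F C (0 : Matrix π κ K)).mulVec)
    (hZ₁ : Z₁ 1 = A₁ * Z₁ 0 + B₁ * U 0 + F₁ * H 0)
    (hZ₂ : ∀ k ≤ 1, Z₂ k = -∑ j ∈ range s, R ^ j * (B₂ * U (j + k) + F₂ * H (j + k)))
    (hX : ∀ k ≤ 1, X k = P * fromRows (Z₁ k) (Z₂ k)) (hY : ∀ k ≤ 1, Y k = C * X k) (c : K)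
    {v : τ → K} (hv : fromRows (X 0) (fromRows (U 0) (Y 1)) *ᵥ v = 0) :
    fromRows (c • X 0 - X 1) (fromRows (U 0) (fromRows (Y 0) (Y 1))) *ᵥ v = 0 := by
  simp only [fromRows_mulVec, ← Sum.elim_zero_zero, Sum.elim_eq_iff] at hv ⊢
  obtain ⟨hx₀, hu₀, hy₁⟩ := hv
  have hx₁ : X 1 *ᵥ v = 0 := by
    simp only [hX _ le_rfl, hX _ zero_le_one, hY _ le_rfl, ← mulVec_mulVec,
      fromRows_mulVec] at hx₀ hy₁ ⊢
    exact hW.state_one_eq_zero (ζ₁ := fun k => Z₁ k *ᵥ v) (ζ₂ := fun k => Z₂ k *ᵥ v)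
      (u := fun k => U k *ᵥ v) (η := fun k => H k *ᵥ v) (B₁ := B₁) hR hEFC
      (by simp only [hZ₁, add_mulVec, mulVec_mulVec])
      (fun k hk => mulVec_eq_fastResponse_of_eq (hZ₂ k hk) v) hx₀ hu₀ hy₁
  refine ⟨by simp [sub_mulVec, smul_mulVec, hx₀, hx₁], hu₀, ?_, ?_⟩ <;>
    simp [hY, ← mulVec_mulVec, hx₀, hx₁]

theorem exists_dataMatrix_mulVec_eq_zero (hW : WeierstrassForm E A F S P A₁ R F₁ F₂)
    (hR : R ^ s = 0) (hZ₁ : Z₁ 1 = A₁ * Z₁ 0 + B₁ * U 0 + F₁ * H 0)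
    (hZ₂ : ∀ k ≤ 1, Z₂ k = -∑ j ∈ range s, R ^ j * (B₂ * U (j + k) + F₂ * H (j + k)))
    (hX : ∀ k ≤ 1, X k = P * fromRows (Z₁ k) (Z₂ k)) (hY : ∀ k ≤ 1, Y k = C * X k)
    (hPE : ∀ (z : ι₁ → K) (u : ℕ → μ → K) (η : ℕ → κ → K),
      ∃ v, Z₁ 0 *ᵥ v = z ∧ ∀ k ≤ s, U k *ᵥ v = u k ∧ H k *ᵥ v = η k)
    {c : K} {x : ι → K} {η₀ : κ → K} (hpencil : (c • E - A) *ᵥ x = F *ᵥ η₀)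
    (hCx : C *ᵥ x = 0) :
    ∃ v, fromRows (c • X 0 - X 1) (fromRows (U 0) (fromRows (Y 0) (Y 1))) *ᵥ v = 0 ∧
      X 0 *ᵥ v = x := by
  obtain ⟨ξ, rfl⟩ := hW.bijective_P.2 x
  obtain ⟨v, hz, huη⟩ := hPE (ξ ∘ Sum.inl) (fun _ => 0) (fun k => c ^ k • η₀)
  obtain ⟨h₀, h₁⟩ := hW.trajectory_eq_of_pencil (ζ₁ := fun k => Z₁ k *ᵥ v)
    (ζ₂ := fun k => Z₂ k *ᵥ v) (u := fun k => U k *ᵥ v) (η := fun k => H k *ᵥ v) (B₁ := B₁) hR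
    hpencil
    (by simp only [hZ₁, add_mulVec, mulVec_mulVec])
    (fun k hk => mulVec_eq_fastResponse_of_eq (hZ₂ k hk) v) hz
    (fun k hk => (huη k hk).1) (fun k hk => (huη k hk).2)
  have hx : ∀ k ≤ 1, X k *ᵥ v = P *ᵥ Sum.elim (Z₁ k *ᵥ v) (Z₂ k *ᵥ v) := fun k hk => by
    rw [hX k hk, ← mulVec_mulVec, fromRows_mulVec]
  refine ⟨v, ?_, by rw [hx 0 zero_le_one, h₀]⟩
  simp only [fromRows_mulVec, ← Sum.elim_zero_zero, Sum.elim_eq_iff]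
  refine ⟨?_, (huη 0 (Nat.zero_le s)).1, ?_, ?_⟩
  · rw [sub_mulVec, smul_mulVec, hx 0 zero_le_one, hx 1 le_rfl, h₀, h₁, mulVec_smul, sub_self]
  · rw [hY 0 zero_le_one, ← mulVec_mulVec, hx 0 zero_le_one, h₀, hCx]
  · rw [hY 1 le_rfl, ← mulVec_mulVec, hx 1 le_rfl, h₁, mulVec_smul, mulVec_smul, hCx, smul_zero]

theorem pencil_mulVec_injective_of_rank_eq [Fintype π] (hW : WeierstrassForm E A F S P A₁ R F₁ F₂)
    (hR : R ^ s = 0) (hEFC : Injective (fromBlocks E F C (0 : Matrix π κ K)).mulVec)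
    (hZ₁ : Z₁ 1 = A₁ * Z₁ 0 + B₁ * U 0 + F₁ * H 0)
    (hZ₂ : ∀ k ≤ 1, Z₂ k = -∑ j ∈ range s, R ^ j * (B₂ * U (j + k) + F₂ * H (j + k)))
    (hX : ∀ k ≤ 1, X k = P * fromRows (Z₁ k) (Z₂ k)) (hY : ∀ k ≤ 1, Y k = C * X k)
    (hPE : ∀ (z : ι₁ → K) (u : ℕ → μ → K) (η : ℕ → κ → K),
      ∃ v, Z₁ 0 *ᵥ v = z ∧ ∀ k ≤ s, U k *ᵥ v = u k ∧ H k *ᵥ v = η k)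
    {c : K} (hrank : (fromRows (c • X 0 - X 1) (fromRows (U 0) (fromRows (Y 0) (Y 1)))).rank =
      (fromRows (X 0) (fromRows (U 0) (Y 1))).rank) :
    Injective (fromBlocks (c • E - A) (-F) C 0).mulVec := by
  have hker := ker_mulVecLin_le_of_rank_eq hrank fun v hv =>
    hW.dataMatrix_mulVec_eq_zero hR hEFC hZ₁ hZ₂ hX hY c hv
  rw [← coe_mulVecLin, injective_iff_map_eq_zero]
  intro w hw
  rw [mulVecLin_apply, fromBlocks_mulVec, ← Sum.elim_zero_zero, Sum.elim_eq_iff, zero_mulVec,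
    add_zero, neg_mulVec, ← sub_eq_add_neg, sub_eq_zero] at hw
  obtain ⟨v, hv, hxv⟩ := hW.exists_dataMatrix_mulVec_eq_zero hR hZ₁ hZ₂ hX hY hPE hw.1 hw.2
  have hx : w ∘ Sum.inl = 0 := by
    simpa [fromRows_mulVec, hxv] using congrArg (· ∘ Sum.inl) (hker hv)
  have hη := (eq_zero_of_fromBlocks_mulVec_injective hEFC (x := 0) (η := w ∘ Sum.inr)
    (by simpa [hx] using hw.1) (mulVec_zero C)).2
  rw [← Sum.elim_comp_inl_inr w, hx, hη, Sum.elim_zero_zero]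

end DataMatrices

end WeierstrassForm

end Weierstrass

section Complexification

variable {a b c : Type}

theorem cmap_mul [Fintype b] (M : Matrix a b ℝ) (N : Matrix b c ℝ) :
    cmap (M * N) = cmap M * cmap N :=
  Matrix.map_mul (f := Complex.ofRealHom)

theorem cmap_pow [Fintype a] [DecidableEq a] (M : Matrix a a ℝ) (k : ℕ) :
    cmap (M ^ k) = cmap M ^ k :=
  map_pow Complex.ofRealHom.mapMatrix M k

theorem cmap_zero : cmap (0 : Matrix a b ℝ) = 0 :=
  Matrix.map_zero _ Complex.ofReal_zero

theorem cmap_one [DecidableEq a] : cmap (1 : Matrix a a ℝ) = 1 :=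
  Matrix.map_one _ Complex.ofReal_zero Complex.ofReal_one

theorem cmap_add (M N : Matrix a b ℝ) : cmap (M + N) = cmap M + cmap N :=
  Matrix.map_add _ Complex.ofReal_add M N

theorem cmap_neg (M : Matrix a b ℝ) : cmap (-M) = -cmap M :=
  Matrix.map_neg _ Complex.ofReal_neg M

theorem cmap_sum {β : Type*} (t : Finset β) (M : β → Matrix a b ℝ) :
    cmap (∑ j ∈ t, M j) = ∑ j ∈ t, cmap (M j) :=
  map_sum Complex.ofRealHom.toAddMonoidHom.mapMatrix M t

theorem cmap_fromBlocks {d : Type} (M₁₁ : Matrix a c ℝ) (M₁₂ : Matrix a d ℝ) (M₂₁ : Matrix b c ℝ)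
    (M₂₂ : Matrix b d ℝ) :
    cmap (fromBlocks M₁₁ M₁₂ M₂₁ M₂₂) = fromBlocks (cmap M₁₁) (cmap M₁₂) (cmap M₂₁) (cmap M₂₂) :=
  fromBlocks_map _ _ _ _ _

theorem cmap_fromRows (M₁ : Matrix a c ℝ) (M₂ : Matrix b c ℝ) :
    cmap (fromRows M₁ M₂) = fromRows (cmap M₁) (cmap M₂) := by
  ext (i | i) j <;> rfl

theorem mulVec_injective_cmap_of_rank_eq [Fintype a] [Fintype b] {M : Matrix a b ℝ}
    (h : M.rank = Fintype.card b) : Injective (cmap M).mulVec :=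
  (rank_eq_card_width_iff_mulVec_injective _).1 (rank_map_algebraMap_of_rank_eq_card_width h)

theorem mulVec_surjective_cmap_of_rank_eq [Fintype a] [Fintype b] {M : Matrix a b ℝ}
    (h : M.rank = Fintype.card a) : Surjective (cmap M).mulVec :=
  mulVec_surjective_of_rank_eq_card_height (rank_map_algebraMap_of_rank_eq_card_height h)

theorem weierstrassForm_cmap {ι ι₁ ι₂ κ : Type} [Fintype ι] [Fintype ι₁] [Fintype ι₂] [Fintype κ]
    [DecidableEq ι] [DecidableEq ι₁] [DecidableEq ι₂] (e : ι₁ ⊕ ι₂ ≃ ι) {E A S P : Matrix ι ι ℝ}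
    {F : Matrix ι κ ℝ} {A₁ : Matrix ι₁ ι₁ ℝ} {R : Matrix ι₂ ι₂ ℝ} {F₁ : Matrix ι₁ κ ℝ}
    {F₂ : Matrix ι₂ κ ℝ} (hS : IsUnit S) (hP : IsUnit P)
    (hE : (S * E * P).submatrix e e = fromBlocks 1 0 0 R)
    (hA : (S * A * P).submatrix e e = fromBlocks A₁ 0 0 1)
    (hF : (S * F).submatrix e id = fromRows F₁ F₂) :
    WeierstrassForm (cmap E) (cmap A) (cmap F) (cmap (S.submatrix e id))
      (cmap (P.submatrix id e)) (cmap A₁) (cmap R) (cmap F₁) (cmap F₂) := by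
  have hunit {M : Matrix ι ι ℝ} (h : IsUnit M) : IsUnit (cmap M) :=
    h.map Complex.ofRealHom.mapMatrix
  have hmul (M : Matrix ι ι ℝ) : cmap (S.submatrix e id) * cmap M * cmap (P.submatrix id e) =
      cmap ((S * M * P).submatrix e e) := by
    rw [← cmap_mul, ← cmap_mul, submatrix_mul _ _ _ id _ bijective_id,
      submatrix_mul _ _ _ id _ bijective_id, submatrix_id_id]
  refine ⟨fun v w h => ?_, ?_, ?_, ?_, ?_⟩
  · have hS' (v : ι → ℂ) : cmap (S.submatrix e id) *ᵥ v = (cmap S *ᵥ v) ∘ e :=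
      submatrix_mulVec_equiv (cmap S) v e (Equiv.refl ι)
    rw [hS', hS'] at h
    exact mulVec_injective_iff_isUnit.2 (hunit hS) (e.surjective.injective_comp_right h)
  · have hP' : (cmap (P.submatrix id e)).mulVec = (cmap P).mulVec ∘ fun ξ => ξ ∘ e.symm :=
      funext fun ξ => submatrix_mulVec_equiv (cmap P) ξ id e
    have hPc : Bijective (cmap P).mulVec :=
      ⟨mulVec_injective_iff_isUnit.2 (hunit hP), mulVec_surjective_iff_isUnit.2 (hunit hP)⟩
    rw [hP']
    exact hPc.comp (e.arrowCongr (Equiv.refl ℂ)).bijective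
  · rw [hmul, hE, cmap_fromBlocks, cmap_one, cmap_zero, cmap_zero]
  · rw [hmul, hA, cmap_fromBlocks, cmap_one, cmap_zero, cmap_zero]
  · rw [← cmap_mul, ← submatrix_id_id F, ← submatrix_mul _ _ _ id _ bijective_id, hF,
      cmap_fromRows]

end Complexification

section HistoricalData

variable {T : ℕ} {ι ι₁ ι₂ μ κ : Type}

theorem cmap_histMat_sumElim (f : ℕ → ι₁ → ℝ) (g : ℕ → ι₂ → ℝ) (k : ℕ) :
    cmap (histMat T (fun t => Sum.elim (f t) (g t)) k) =
      fromRows (cmap (histMat T f k)) (cmap (histMat T g k)) := by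
  ext (i | i) t <;> rfl

theorem cmap_histMat_eq_mul [Fintype ι₁] {f : ℕ → ι₁ → ℝ} {g : ℕ → ι → ℝ} {M : Matrix ι ι₁ ℝ}
    {k : ℕ} (h : ∀ t < T, g (t + k) = M *ᵥ f (t + k)) :
    cmap (histMat T g k) = cmap M * cmap (histMat T f k) := by
  rw [← cmap_mul]
  congr 1
  ext i t
  simp [histMat, h t t.2, mul_apply, mulVec, dotProduct]

theorem cmap_histMat_eq_mul_fromRows [Fintype ι] [Fintype ι₁] [Fintype ι₂] {P : Matrix ι ι ℝ}
    (e : ι₁ ⊕ ι₂ ≃ ι) {x : ℕ → ι → ℝ} {z₁ : ℕ → ι₁ → ℝ} {z₂ : ℕ → ι₂ → ℝ}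
    (hx : ∀ k ≤ T, x k = P *ᵥ fun i => Sum.elim (z₁ k) (z₂ k) (e.symm i)) {k : ℕ} (hk : k ≤ 1) :
    cmap (histMat T x k) =
      cmap (P.submatrix id e) * fromRows (cmap (histMat T z₁ k)) (cmap (histMat T z₂ k)) := by
  rw [← cmap_histMat_sumElim]
  refine cmap_histMat_eq_mul fun t ht => ?_
  rw [hx _ (by omega), submatrix_mulVec_equiv]
  rfl

theorem cmap_histMat_one_eq [Fintype ι₁] [Fintype μ] [Fintype κ] {z : ℕ → ι₁ → ℝ}
    {u : ℕ → μ → ℝ} {η : ℕ → κ → ℝ} {A : Matrix ι₁ ι₁ ℝ} {B : Matrix ι₁ μ ℝ}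
    {F : Matrix ι₁ κ ℝ} (hz : ∀ k < T, z (k + 1) = A *ᵥ z k + B *ᵥ u k + F *ᵥ η k) :
    cmap (histMat T z 1) = cmap A * cmap (histMat T z 0) + cmap B * cmap (histMat T u 0) +
      cmap F * cmap (histMat T η 0) := by
  simp only [← cmap_mul, ← cmap_add]
  congr 1
  ext i t
  simp [histMat, hz t t.2, mul_apply, mulVec, dotProduct]

theorem cmap_histMat_eq_neg_sum [Fintype ι₂] [DecidableEq ι₂] [Fintype μ] [Fintype κ] {s : ℕ}
    {z : ℕ → ι₂ → ℝ} {u : ℕ → μ → ℝ} {η : ℕ → κ → ℝ} {R : Matrix ι₂ ι₂ ℝ}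
    {B : Matrix ι₂ μ ℝ} {F : Matrix ι₂ κ ℝ}
    (hz : ∀ k ≤ T, z k = -∑ j ∈ range s, R ^ j *ᵥ (B *ᵥ u (k + j) + F *ᵥ η (k + j)))
    {k : ℕ} (hk : k ≤ 1) :
    cmap (histMat T z k) = -∑ j ∈ range s,
      cmap R ^ j * (cmap B * cmap (histMat T u (j + k)) + cmap F * cmap (histMat T η (j + k))) := by
  simp only [← cmap_pow, ← cmap_mul, ← cmap_add, ← cmap_sum, ← cmap_neg]
  congr 1
  ext i t
  simp only [histMat, of_apply, hz (t + k) (by have := t.2; omega), Matrix.neg_apply,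
    Pi.neg_apply, Matrix.sum_apply, Finset.sum_apply]
  congr 1
  refine sum_congr rfl fun j _ => ?_
  simp [mul_apply, mulVec, dotProduct, add_comm k, add_assoc, mul_add, sum_add_distrib]

def excitationMatrix (T s : ℕ) (z : ℕ → ι₁ → ℝ) (u : ℕ → μ → ℝ) (η : ℕ → κ → ℝ) :
    Matrix (ι₁ ⊕ Fin (s + 1) × (μ ⊕ κ)) (Fin T) ℝ :=
  Matrix.of fun i k => Sum.elim (z k) (fun jl => Sum.elim (u (k + jl.1)) (η (k + jl.1)) jl.2) i

theorem exists_cmap_histMat_mulVec_eq [Fintype ι₁] [Fintype μ] [Fintype κ] {s : ℕ}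
    {z : ℕ → ι₁ → ℝ} {u : ℕ → μ → ℝ} {η : ℕ → κ → ℝ}
    (hPE : (excitationMatrix T s z u η).rank = Fintype.card (ι₁ ⊕ Fin (s + 1) × (μ ⊕ κ)))
    (z' : ι₁ → ℂ) (u' : ℕ → μ → ℂ) (η' : ℕ → κ → ℂ) :
    ∃ v, cmap (histMat T z 0) *ᵥ v = z' ∧
      ∀ k ≤ s, cmap (histMat T u k) *ᵥ v = u' k ∧ cmap (histMat T η k) *ᵥ v = η' k := by
  obtain ⟨v, hv⟩ := mulVec_surjective_cmap_of_rank_eq hPE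
    (Sum.elim z' fun jl => Sum.elim (u' jl.1) (η' jl.1) jl.2)
  refine ⟨v, funext fun i => congrFun hv (.inl i), fun k hk =>
    ⟨funext fun i => ?_, funext fun i => ?_⟩⟩
  · exact congrFun hv (.inr (⟨k, by omega⟩, .inl i))
  · exact congrFun hv (.inr (⟨k, by omega⟩, .inr i))

end HistoricalData

theorem stmt_16_general (n1 n2 s m p q T : ℕ)
    (E A : Matrix (Fin (n1 + n2)) (Fin (n1 + n2)) ℝ)
    (F : Matrix (Fin (n1 + n2)) (Fin q) ℝ)
    (C : Matrix (Fin p) (Fin (n1 + n2)) ℝ)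
    (S P : Matrix (Fin (n1 + n2)) (Fin (n1 + n2)) ℝ)
    (hS : IsUnit S) (hP : IsUnit P)
    (A1 : Matrix (Fin n1) (Fin n1) ℝ) (R : Matrix (Fin n2) (Fin n2) ℝ)
    (B1 : Matrix (Fin n1) (Fin m) ℝ) (B2 : Matrix (Fin n2) (Fin m) ℝ)
    (F1 : Matrix (Fin n1) (Fin q) ℝ) (F2 : Matrix (Fin n2) (Fin q) ℝ)
    (hR : R ^ s = 0)
    (hE : (S * E * P).submatrix ⇑finSumFinEquiv ⇑finSumFinEquiv = Matrix.fromBlocks 1 0 0 R)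
    (hA : (S * A * P).submatrix ⇑finSumFinEquiv ⇑finSumFinEquiv = Matrix.fromBlocks A1 0 0 1)
    (hFdec : (S * F).submatrix ⇑finSumFinEquiv id = Matrix.fromRows F1 F2)
    (ud : ℕ → Fin m → ℝ) (etad : ℕ → Fin q → ℝ)
    (z1d : ℕ → Fin n1 → ℝ) (z2d : ℕ → Fin n2 → ℝ)
    (xd : ℕ → Fin (n1 + n2) → ℝ) (yd : ℕ → Fin p → ℝ)
    (hz1 : ∀ k < T, z1d (k + 1) = A1 *ᵥ z1d k + B1 *ᵥ ud k + F1 *ᵥ etad k)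
    (hz2 : ∀ k ≤ T, z2d k
      = -(∑ j ∈ Finset.range s, (R ^ j *ᵥ (B2 *ᵥ ud (k + j) + F2 *ᵥ etad (k + j)))))
    (hxd : ∀ k ≤ T, xd k = P *ᵥ (fun i => Sum.elim (z1d k) (z2d k) (finSumFinEquiv.symm i)))
    (hyd : ∀ k ≤ T, yd k = C *ᵥ xd k)
    (hPE : (Matrix.of fun (i : Fin n1 ⊕ (Fin (s + 1) × (Fin m ⊕ Fin q))) (k : Fin T) =>
        Sum.elim (z1d (k : ℕ))
          (fun jl => Sum.elim (ud ((k : ℕ) + (jl.1 : ℕ))) (etad ((k : ℕ) + (jl.1 : ℕ))) jl.2)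
          i).rank = n1 + (s + 1) * (m + q))
    (hmatch : (Matrix.fromBlocks E F C 0).rank = (n1 + n2) + q)
    (hdata : ∀ lam : ℂ, 1 ≤ ‖lam‖ →
      (Matrix.fromRows (lam • cmap (histMat T xd 0) - cmap (histMat T xd 1))
        (Matrix.fromRows (cmap (histMat T ud 0))
          (Matrix.fromRows (cmap (histMat T yd 0)) (cmap (histMat T yd 1))))).rank
      = (Matrix.fromRows (cmap (histMat T xd 0))
          (Matrix.fromRows (cmap (histMat T ud 0)) (cmap (histMat T yd 1)))).rank) :
    ∀ lam : ℂ, 1 ≤ ‖lam‖ →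
      (Matrix.fromBlocks (lam • cmap E - cmap A) (-(cmap F)) (cmap C) 0).rank
        = (n1 + n2) + q := by
  intro lam hlam
  have hEFC : Injective (fromBlocks (cmap E) (cmap F) (cmap C) 0).mulVec := by
    simpa [cmap_fromBlocks, cmap_zero] using
      mulVec_injective_cmap_of_rank_eq (hmatch.trans (by simp))
  have hW := weierstrassForm_cmap finSumFinEquiv hS hP hE hA hFdec
  have hinj := hW.pencil_mulVec_injective_of_rank_eq
    (Z₁ := fun k => cmap (histMat T z1d k)) (Z₂ := fun k => cmap (histMat T z2d k))
    (U := fun k => cmap (histMat T ud k)) (H := fun k => cmap (histMat T etad k))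
    (X := fun k => cmap (histMat T xd k)) (Y := fun k => cmap (histMat T yd k))
    (by rw [← cmap_pow, hR, cmap_zero]) hEFC (cmap_histMat_one_eq hz1)
    (fun k hk => cmap_histMat_eq_neg_sum hz2 hk)
    (fun k hk => cmap_histMat_eq_mul_fromRows _ hxd hk)
    (fun k hk => cmap_histMat_eq_mul fun t ht => hyd _ (by omega))
    (exists_cmap_histMat_mulVec_eq (hPE.trans (by simp))) (hdata lam hlam)
  simpa using (rank_eq_card_width_iff_mulVec_injective _).2 hinj

theorem stmt_16 (n1 n2 s m p q T : ℕ) (hs : 1 ≤ s) (hT : 1 ≤ T)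
    (E A : Matrix (Fin (n1 + n2)) (Fin (n1 + n2)) ℝ)
    (B : Matrix (Fin (n1 + n2)) (Fin m) ℝ)
    (F : Matrix (Fin (n1 + n2)) (Fin q) ℝ) (hF : F.rank = q)
    (C : Matrix (Fin p) (Fin (n1 + n2)) ℝ)
    (S P : Matrix (Fin (n1 + n2)) (Fin (n1 + n2)) ℝ)
    (hS : IsUnit S) (hP : IsUnit P)
    (A1 : Matrix (Fin n1) (Fin n1) ℝ) (R : Matrix (Fin n2) (Fin n2) ℝ)
    (B1 : Matrix (Fin n1) (Fin m) ℝ) (B2 : Matrix (Fin n2) (Fin m) ℝ)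
    (F1 : Matrix (Fin n1) (Fin q) ℝ) (F2 : Matrix (Fin n2) (Fin q) ℝ)
    (C1 : Matrix (Fin p) (Fin n1) ℝ) (C2 : Matrix (Fin p) (Fin n2) ℝ)
    (hR : R ^ s = 0)
    (hE : (S * E * P).submatrix ⇑finSumFinEquiv ⇑finSumFinEquiv = Matrix.fromBlocks 1 0 0 R)
    (hA : (S * A * P).submatrix ⇑finSumFinEquiv ⇑finSumFinEquiv = Matrix.fromBlocks A1 0 0 1)
    (hB : (S * B).submatrix ⇑finSumFinEquiv id = Matrix.fromRows B1 B2)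
    (hFdec : (S * F).submatrix ⇑finSumFinEquiv id = Matrix.fromRows F1 F2)
    (hC : (C * P).submatrix id ⇑finSumFinEquiv = Matrix.fromCols C1 C2)
    (ud : ℕ → Fin m → ℝ) (etad : ℕ → Fin q → ℝ)
    (z1d : ℕ → Fin n1 → ℝ) (z2d : ℕ → Fin n2 → ℝ)
    (xd : ℕ → Fin (n1 + n2) → ℝ) (yd : ℕ → Fin p → ℝ)
    (hz1 : ∀ k < T, z1d (k + 1) = A1 *ᵥ z1d k + B1 *ᵥ ud k + F1 *ᵥ etad k)
    (hz2 : ∀ k ≤ T, z2d k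
      = -(∑ j ∈ Finset.range s, (R ^ j *ᵥ (B2 *ᵥ ud (k + j) + F2 *ᵥ etad (k + j)))))
    (hxd : ∀ k ≤ T, xd k = P *ᵥ (fun i => Sum.elim (z1d k) (z2d k) (finSumFinEquiv.symm i)))
    (hyd : ∀ k ≤ T, yd k = C *ᵥ xd k)
    (hPE : (Matrix.of fun (i : Fin n1 ⊕ (Fin (s + 1) × (Fin m ⊕ Fin q))) (k : Fin T) =>
        Sum.elim (z1d (k : ℕ))
          (fun jl => Sum.elim (ud ((k : ℕ) + (jl.1 : ℕ))) (etad ((k : ℕ) + (jl.1 : ℕ))) jl.2)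
          i).rank = n1 + (s + 1) * (m + q))
    (hmatch : (Matrix.fromBlocks E F C 0).rank = (n1 + n2) + q)
    (hdata : ∀ lam : ℂ, 1 ≤ ‖lam‖ →
      (Matrix.fromRows (lam • cmap (histMat T xd 0) - cmap (histMat T xd 1))
        (Matrix.fromRows (cmap (histMat T ud 0))
          (Matrix.fromRows (cmap (histMat T yd 0)) (cmap (histMat T yd 1))))).rank
      = (Matrix.fromRows (cmap (histMat T xd 0))
          (Matrix.fromRows (cmap (histMat T ud 0)) (cmap (histMat T yd 1)))).rank) :
    ∀ lam : ℂ, 1 ≤ ‖lam‖ →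
      (Matrix.fromBlocks (lam • cmap E - cmap A) (-(cmap F)) (cmap C) 0).rank
        = (n1 + n2) + q :=
  stmt_16_general n1 n2 s m p q T E A F C S P hS hP A1 R B1 B2 F1 F2 hR hE hA hFdec ud etad z1d z2d
    xd yd hz1 hz2 hxd hyd hPE hmatch hdata
end
end
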